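/- Let n ≥ 3 be an integer and assume that E[ε_u^m] = (m−1)·E[ε_u^{m−2}]·E[ε_u²] holds for every integer m with 3 ≤ m < n. Then E[Z^{n−1}·D] − (n−1)·E[D·Z]·E[Z^{n−2}] = α_z^{n−1}·α_d·( E[ε_u^n] − (n−1)·E[ε_u^{n−2}]·E[ε_u²] ). -/

import Mathlib

/-!
Write `u k = E[ε_u^k]` and `e k = E[ε_z^k]`. By independence the mixed moments of
`Z = α_z ε_u + ε_z` expand binomially, `E[Z^m ε_u^j] = ∑ C(m,k) α_z^k u (k+j) e (m-k)`, and the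
centered noise `ε_d`, independent of `(ε_u, ε_z)`, drops out: `E[Z^m D] = α_d E[Z^m ε_u]`.
Since `n' C(n'-1, k-1) = k C(n', k)`, the `k`-th term of `E[Z^(n-1) ε_u]` pairs off with the
`(k-1)`-st term of `(n-1) α_z u 2 E[Z^(n-2)]`, leaving
`∑_{k ≥ 1} C(n-1, k) α_z^k e (n-1-k) (u (k+1) - k u (k-1) u 2)` (the `k = 0` term carries
`u 1 = 0`). The moment recursion kills every term but `k = n - 1`.
-/

open MeasureTheory ProbabilityTheory Finset

section Algebra

/-- `momentDefect u (m - 2)` is the paper's `E[ε^m] - (m - 1) E[ε^(m-2)] E[ε^2]`; it vanishes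
identically for the moments of a centered Gaussian. -/
def momentDefect (u : ℕ → ℝ) (k : ℕ) : ℝ := u (k + 2) - (k + 1) * u k * u 2

lemma sum_choose_sub_eq_add_sum_momentDefect (u e : ℕ → ℝ) (a : ℝ) (m : ℕ) :
    ∑ k ∈ range (m + 2), (m + 1).choose k * a ^ k * (u (k + 1) * e (m + 1 - k))
        - (m + 1) * (a * u 2) * ∑ k ∈ range (m + 1), m.choose k * a ^ k * (u k * e (m - k)) =
      u 1 * e (m + 1) +
        ∑ k ∈ range (m + 1),
          (m + 1).choose (k + 1) * a ^ (k + 1) * e (m - k) * momentDefect u k := by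
  rw [sum_range_succ', mul_sum, add_sub_right_comm, ← sum_sub_distrib, add_comm]
  simp only [Nat.choose_zero_right, Nat.cast_one, pow_zero, one_mul, zero_add, Nat.sub_zero]
  congr 1
  refine sum_congr rfl fun k _ => ?_
  have hchoose : ((m + 1 : ℕ) : ℝ) * m.choose k = (m + 1).choose (k + 1) * ((k : ℝ) + 1) := by
    exact_mod_cast Nat.add_one_mul_choose_eq m k
  rw [show m + 1 - (k + 1) = m - k by omega, momentDefect]
  push_cast at hchoose
  linear_combination (-(a ^ (k + 1) * u k * e (m - k) * u 2)) * hchoose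

lemma sum_choose_sub_eq_pow_mul_momentDefect {u e : ℕ → ℝ} (a : ℝ) {m : ℕ} (hu₁ : u 1 = 0)
    (he₀ : e 0 = 1) (hu : ∀ k < m, momentDefect u k = 0) :
    ∑ k ∈ range (m + 2), (m + 1).choose k * a ^ k * (u (k + 1) * e (m + 1 - k))
        - (m + 1) * (a * u 2) * ∑ k ∈ range (m + 1), m.choose k * a ^ k * (u k * e (m - k)) =
      a ^ (m + 1) * momentDefect u m := by
  rw [sum_choose_sub_eq_add_sum_momentDefect, sum_range_succ,
    sum_eq_zero fun k hk => by rw [hu k (mem_range.mp hk), mul_zero]]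
  simp [hu₁, he₀]

lemma momentDefect_eq_zero_of_recursion {u : ℕ → ℝ} {m : ℕ} (hu₀ : u 0 = 1)
    (hrec : ∀ j : ℕ, 3 ≤ j → j < m + 2 → u j = ((j : ℝ) - 1) * u (j - 2) * u 2) :
    ∀ k < m, momentDefect u k = 0 := by
  intro k hk
  rw [momentDefect]
  rcases k.eq_zero_or_pos with rfl | hk₀
  · simp [hu₀]
  · rw [hrec (k + 2) (by omega) (by omega), Nat.add_sub_cancel]
    push_cast
    ring

end Algebra

section Moments

variable {Ω : Type*} [MeasurableSpace Ω] {μ : Measure Ω}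

lemma MeasureTheory.MemLp.integrable_pow [IsFiniteMeasure μ] {f : Ω → ℝ} {p : ℕ}
    (hf : MemLp f p μ) : Integrable (fun ω => f ω ^ p) μ :=
  hf.integrable_norm_pow'.mono (hf.aestronglyMeasurable.pow p) (ae_of_all _ fun ω => by simp)

namespace ProbabilityTheory

variable {X Y W : Ω → ℝ}

lemma IndepFun.integrable_pow_mul_pow (hXY : IndepFun X Y μ)
    (hX : ∀ p : ℕ, Integrable (fun ω => X ω ^ p) μ) (hY : ∀ p : ℕ, Integrable (fun ω => Y ω ^ p) μ)
    (p q : ℕ) : Integrable (fun ω => X ω ^ p * Y ω ^ q) μ :=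
  (hXY.comp (measurable_id.pow_const p) (measurable_id.pow_const q)).integrable_mul (hX p) (hY q)

lemma IndepFun.integral_pow_mul_pow (hXY : IndepFun X Y μ)
    (hX : ∀ p : ℕ, Integrable (fun ω => X ω ^ p) μ) (hY : ∀ p : ℕ, Integrable (fun ω => Y ω ^ p) μ)
    (p q : ℕ) : ∫ ω, X ω ^ p * Y ω ^ q ∂μ = (∫ ω, X ω ^ p ∂μ) * ∫ ω, Y ω ^ q ∂μ :=
  (hXY.comp (measurable_id.pow_const p) (measurable_id.pow_const q)).integral_mul_eq_mul_integral
    (hX p).aestronglyMeasurable (hY q).aestronglyMeasurable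

lemma linear_pow_mul_pow_eq_sum (a x y : ℝ) (m j : ℕ) :
    (a * x + y) ^ m * x ^ j =
      ∑ k ∈ range (m + 1), m.choose k * a ^ k * (x ^ (k + j) * y ^ (m - k)) := by
  rw [add_pow, sum_mul]
  exact sum_congr rfl fun k _ => by ring

lemma IndepFun.integrable_linear_pow_mul_pow (hXY : IndepFun X Y μ)
    (hX : ∀ p : ℕ, Integrable (fun ω => X ω ^ p) μ) (hY : ∀ p : ℕ, Integrable (fun ω => Y ω ^ p) μ)
    (a : ℝ) (m j : ℕ) : Integrable (fun ω => (a * X ω + Y ω) ^ m * X ω ^ j) μ := by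
  simp_rw [linear_pow_mul_pow_eq_sum]
  exact integrable_finsetSum _ fun k _ => (hXY.integrable_pow_mul_pow hX hY _ _).const_mul _

lemma IndepFun.integral_linear_pow_mul_pow (hXY : IndepFun X Y μ)
    (hX : ∀ p : ℕ, Integrable (fun ω => X ω ^ p) μ) (hY : ∀ p : ℕ, Integrable (fun ω => Y ω ^ p) μ)
    (a : ℝ) (m j : ℕ) :
    ∫ ω, (a * X ω + Y ω) ^ m * X ω ^ j ∂μ =
      ∑ k ∈ range (m + 1),
        m.choose k * a ^ k * ((∫ ω, X ω ^ (k + j) ∂μ) * ∫ ω, Y ω ^ (m - k) ∂μ) := by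
  simp_rw [linear_pow_mul_pow_eq_sum]
  rw [integral_finsetSum _ fun k _ => (hXY.integrable_pow_mul_pow hX hY _ _).const_mul _]
  simp_rw [integral_const_mul, hXY.integral_pow_mul_pow hX hY]

lemma IndepFun.integral_linear_pow_mul_linear (hXY : IndepFun X Y μ)
    (hW : IndepFun (fun ω => (X ω, Y ω)) W μ)
    (hX : ∀ p : ℕ, Integrable (fun ω => X ω ^ p) μ) (hY : ∀ p : ℕ, Integrable (fun ω => Y ω ^ p) μ)
    (hW_int : Integrable W μ) (hW_zero : ∫ ω, W ω ∂μ = 0) (a b : ℝ) (m : ℕ) :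
    ∫ ω, (a * X ω + Y ω) ^ m * (b * X ω + W ω) ∂μ = b * ∫ ω, (a * X ω + Y ω) ^ m * X ω ∂μ := by
  have hZX_int : Integrable (fun ω => (a * X ω + Y ω) ^ m * X ω) μ := by
    simpa using hXY.integrable_linear_pow_mul_pow hX hY a m 1
  have hZ_int : Integrable (fun ω => (a * X ω + Y ω) ^ m) μ := by
    simpa using hXY.integrable_linear_pow_mul_pow hX hY a m 0
  have hZW : IndepFun (fun ω => (a * X ω + Y ω) ^ m) W μ :=
    hW.comp (φ := fun z : ℝ × ℝ => (a * z.1 + z.2) ^ m) (by fun_prop) measurable_id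
  have hZW_zero : ∫ ω, (a * X ω + Y ω) ^ m * W ω ∂μ = 0 := by
    rw [hZW.integral_fun_mul_eq_mul_integral hZ_int.aestronglyMeasurable
      hW_int.aestronglyMeasurable, hW_zero, mul_zero]
  have hZW_int : Integrable (fun ω => (a * X ω + Y ω) ^ m * W ω) μ :=
    hZW.integrable_mul hZ_int hW_int
  calc ∫ ω, (a * X ω + Y ω) ^ m * (b * X ω + W ω) ∂μ
      = ∫ ω, b * ((a * X ω + Y ω) ^ m * X ω) + (a * X ω + Y ω) ^ m * W ω ∂μ :=
        integral_congr_ae (ae_of_all _ fun ω => by ring)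
    _ = b * ∫ ω, (a * X ω + Y ω) ^ m * X ω ∂μ := by
        rw [integral_add (hZX_int.const_mul b) hZW_int, integral_const_mul, hZW_zero, add_zero]

end ProbabilityTheory

end Moments

theorem cross_moment_identity_Z_general
    {Ω : Type*} [MeasurableSpace Ω] {μ : MeasureTheory.Measure Ω}
    [MeasureTheory.IsProbabilityMeasure μ]
    (εu εz εd εy : Ω → ℝ)
    (hind : ProbabilityTheory.iIndepFun ![εu, εz, εd, εy] μ)
    (h0u : ∫ ω, εu ω ∂μ = 0)
    (h0d : ∫ ω, εd ω ∂μ = 0)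
    (hLu : ∀ n : ℕ, MeasureTheory.MemLp εu n μ) (hLz : ∀ n : ℕ, MeasureTheory.MemLp εz n μ)
    (hLd : ∀ n : ℕ, MeasureTheory.MemLp εd n μ) (hLy : ∀ n : ℕ, MeasureTheory.MemLp εy n μ)
    (αz αd : ℝ) (Z D : Ω → ℝ)
    (hZ : ∀ ω, Z ω = αz * εu ω + εz ω)
    (hD : ∀ ω, D ω = αd * εu ω + εd ω)
    (n : ℕ) (hn : 3 ≤ n)
    (hrec : ∀ m : ℕ, 3 ≤ m → m < n →
      ∫ ω, εu ω ^ m ∂μ =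
        ((m : ℝ) - 1) * (∫ ω, εu ω ^ (m - 2) ∂μ) * ∫ ω, εu ω ^ 2 ∂μ) :
    (∫ ω, Z ω ^ (n - 1) * D ω ∂μ) -
      ((n : ℝ) - 1) * (∫ ω, D ω * Z ω ∂μ) * (∫ ω, Z ω ^ (n - 2) ∂μ) =
    αz ^ (n - 1) * αd *
      ((∫ ω, εu ω ^ n ∂μ) -
        ((n : ℝ) - 1) * (∫ ω, εu ω ^ (n - 2) ∂μ) * ∫ ω, εu ω ^ 2 ∂μ) := by
  have hmeas : ∀ i, AEMeasurable (![εu, εz, εd, εy] i) μ := by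
    intro i
    fin_cases i
    exacts [(hLu 0).1.aemeasurable, (hLz 0).1.aemeasurable, (hLd 0).1.aemeasurable,
      (hLy 0).1.aemeasurable]
  have hUE : IndepFun εu εz μ := hind.indepFun (i := 0) (j := 1) (by decide)
  have hUED : IndepFun (fun ω => (εu ω, εz ω)) εd μ :=
    hind.indepFun_prodMk₀ hmeas 0 1 2 (by decide) (by decide)
  have hU (p : ℕ) : Integrable (fun ω => εu ω ^ p) μ := (hLu p).integrable_pow
  have hE (p : ℕ) : Integrable (fun ω => εz ω ^ p) μ := (hLz p).integrable_pow
  have hD_int : Integrable εd μ := memLp_one_iff_integrable.mp (by simpa using hLd 1)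
  have hZD (k : ℕ) : ∫ ω, Z ω ^ k * D ω ∂μ = αd * ∑ j ∈ range (k + 1),
      k.choose j * αz ^ j * ((∫ ω, εu ω ^ (j + 1) ∂μ) * ∫ ω, εz ω ^ (k - j) ∂μ) := by
    have h := hUE.integral_linear_pow_mul_pow hU hE αz k 1
    simp only [pow_one] at h
    simp only [hZ, hD]
    rw [hUE.integral_linear_pow_mul_linear hUED hU hE hD_int h0d, h]
  have hDZ : ∫ ω, D ω * Z ω ∂μ = αd * (αz * ∫ ω, εu ω ^ 2 ∂μ) := by
    simpa [mul_comm, sum_range_succ, h0u] using hZD 1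
  have hZpow (k : ℕ) : ∫ ω, Z ω ^ k ∂μ = ∑ j ∈ range (k + 1),
      k.choose j * αz ^ j * ((∫ ω, εu ω ^ j ∂μ) * ∫ ω, εz ω ^ (k - j) ∂μ) := by
    simp only [hZ]
    simpa using hUE.integral_linear_pow_mul_pow hU hE αz k 0
  obtain ⟨m, rfl⟩ : ∃ m, n = m + 2 := ⟨n - 2, by omega⟩
  have key := sum_choose_sub_eq_pow_mul_momentDefect (u := fun k => ∫ ω, εu ω ^ k ∂μ)
    (e := fun k => ∫ ω, εz ω ^ k ∂μ) αz (by simpa using h0u) (by simp)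
    (momentDefect_eq_zero_of_recursion (by simp) hrec)
  rw [momentDefect] at key
  rw [show m + 2 - 1 = m + 1 by omega, Nat.add_sub_cancel, hZD, hDZ, hZpow]
  push_cast
  linear_combination αd * key

/-- Under the moment recursion for all 3 ≤ m < n,
    E[Z^{n−1}D] − (n−1)E[DZ]E[Z^{n−2}]
      = α_z^{n−1}·α_d·(E[ε_u^n] − (n−1)E[ε_u^{n−2}]E[ε_u²]). -/
theorem cross_moment_identity_Z
    {Ω : Type*} [MeasurableSpace Ω] {μ : MeasureTheory.Measure Ω}
    [MeasureTheory.IsProbabilityMeasure μ]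
    (εu εz εd εy : Ω → ℝ)
    (hmu : Measurable εu) (hmz : Measurable εz) (hmd : Measurable εd) (hmy : Measurable εy)
    (hind : ProbabilityTheory.iIndepFun ![εu, εz, εd, εy] μ)
    (h0u : ∫ ω, εu ω ∂μ = 0) (h0z : ∫ ω, εz ω ∂μ = 0)
    (h0d : ∫ ω, εd ω ∂μ = 0) (h0y : ∫ ω, εy ω ∂μ = 0)
    (hLu : ∀ n : ℕ, MeasureTheory.MemLp εu n μ) (hLz : ∀ n : ℕ, MeasureTheory.MemLp εz n μ)
    (hLd : ∀ n : ℕ, MeasureTheory.MemLp εd n μ) (hLy : ∀ n : ℕ, MeasureTheory.MemLp εy n μ)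
    (αz αd β γ : ℝ) (Z D Y : Ω → ℝ)
    (hZ : ∀ ω, Z ω = αz * εu ω + εz ω)
    (hD : ∀ ω, D ω = αd * εu ω + εd ω)
    (hY : ∀ ω, Y ω = β * D ω + γ * εu ω + εy ω)
    (n : ℕ) (hn : 3 ≤ n)
    (hrec : ∀ m : ℕ, 3 ≤ m → m < n →
      ∫ ω, εu ω ^ m ∂μ =
        ((m : ℝ) - 1) * (∫ ω, εu ω ^ (m - 2) ∂μ) * ∫ ω, εu ω ^ 2 ∂μ) :
    (∫ ω, Z ω ^ (n - 1) * D ω ∂μ) -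
      ((n : ℝ) - 1) * (∫ ω, D ω * Z ω ∂μ) * (∫ ω, Z ω ^ (n - 2) ∂μ) =
    αz ^ (n - 1) * αd *
      ((∫ ω, εu ω ^ n ∂μ) -
        ((n : ℝ) - 1) * (∫ ω, εu ω ^ (n - 2) ∂μ) * ∫ ω, εu ω ^ 2 ∂μ) :=
  cross_moment_identity_Z_general εu εz εd εy hind h0u h0d hLu hLz hLd hLy αz αd Z D hZ hD n hn hrec
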